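/- arXiv:1907.13533 — 2 statements merged into one kernel-verified Lean document; each statement's English description precedes it below -/
import Mathlib

section
/- In the house-of-cards setting with nonincreasing (b_m) ⊂ [0,1), b₀ < 1: if b_m = O(ρ^m) for some ρ ∈ (0,1), then there exists ρ̄ ∈ (0,1) with b*_m = O(ρ̄^m). -/
/-- Distribution of the "house-of-cards" Markov chain on `ℕ` started at `0`, with
transitions `P(i, i+1) = 1 - b i` and `P(i, 0) = b i`:
`hoc b n j` is the probability that the chain is at state `j` at time `n`. -/
noncomputable def hoc (b : ℕ → ℝ) : ℕ → ℕ → ℝ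
  | 0 => fun j => if j = 0 then 1 else 0
  | n + 1 => fun j =>
      match j with
      | 0 => ∑' i, hoc b n i * b i
      | i + 1 => hoc b n i * (1 - b i)

open Finset Topology

/-!
Let `f i = hocFirstReturn b i` be the probability that the first return to `0` happens at time
`i + 1`. The chain only leaves `0` by climbing, so `u m = P(S_m = 0)` satisfies the renewal
equation `u (n+1) = ∑_{i ≤ n} u (n - i) f i`, and any `r > 0` with `∑ f i / r^(i+1) ≤ 1` gives
`u m ≤ r^m` by strong induction. Since `∑ b < ∞` and `b < 1`, with positive probability the chain
never resets, so `∑ f i < 1`. As `f i ≤ b i` decays geometrically, `t ↦ ∑ f i / t^(i+1)` is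
continuous on a neighbourhood of `1`, and hence stays below `1` at some `r < 1`.
-/

/-- The probability that the chain started at `0` climbs to `i` without resetting. -/
noncomputable def hocSurvival (b : ℕ → ℝ) (i : ℕ) : ℝ := ∏ k ∈ range i, (1 - b k)

noncomputable def hocFirstReturn (b : ℕ → ℝ) (i : ℕ) : ℝ := hocSurvival b i * b i

section Chain

variable (b : ℕ → ℝ)

theorem hoc_eq_zero_of_lt {n j : ℕ} (h : n < j) : hoc b n j = 0 := by
  induction n generalizing j with
  | zero => simp [hoc, Nat.pos_iff_ne_zero.mp h]
  | succ n ih =>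
    obtain ⟨j, rfl⟩ := Nat.exists_eq_add_one_of_ne_zero (by omega : j ≠ 0)
    simp only [hoc, ih (by omega : n < j), zero_mul]

theorem hoc_zero_zero : hoc b 0 0 = 1 := by simp [hoc]

theorem hoc_succ_zero (n : ℕ) : hoc b (n + 1) 0 = ∑ i ∈ range (n + 1), hoc b n i * b i :=
  tsum_eq_sum fun i hi => by rw [hoc_eq_zero_of_lt b (by simpa using hi), zero_mul]

theorem hoc_add_self (n i : ℕ) : hoc b (n + i) i = hoc b n 0 * hocSurvival b i := by
  induction i with
  | zero => simp [hocSurvival]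
  | succ i ih =>
    rw [hocSurvival, prod_range_succ, ← hocSurvival, ← mul_assoc, ← ih]
    rfl

theorem hoc_succ_zero_eq_sum (n : ℕ) :
    hoc b (n + 1) 0 = ∑ i ∈ range (n + 1), hoc b (n - i) 0 * hocFirstReturn b i := by
  rw [hoc_succ_zero]
  refine sum_congr rfl fun i hi => ?_
  obtain ⟨k, rfl⟩ := Nat.exists_eq_add_of_le (Nat.lt_succ_iff.mp (mem_range.mp hi))
  rw [add_comm i k, Nat.add_sub_cancel, hoc_add_self, hocFirstReturn, mul_assoc]

theorem sum_range_hocFirstReturn (n : ℕ) :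
    ∑ i ∈ range n, hocFirstReturn b i = 1 - hocSurvival b n := by
  induction n with
  | zero => simp [hocSurvival]
  | succ n ih =>
    rw [sum_range_succ, ih, hocFirstReturn, hocSurvival, hocSurvival, prod_range_succ]
    ring

variable {b} (hb0 : ∀ k, 0 ≤ b k) (hb1 : ∀ k, b k ≤ 1)
include hb0 hb1

theorem hocFirstReturn_nonneg (i : ℕ) : 0 ≤ hocFirstReturn b i :=
  mul_nonneg (prod_nonneg fun k _ => sub_nonneg.mpr (hb1 k)) (hb0 i)

theorem hocFirstReturn_le (i : ℕ) : hocFirstReturn b i ≤ b i :=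
  mul_le_of_le_one_left (hb0 i)
    (prod_le_one (fun k _ => sub_nonneg.mpr (hb1 k)) fun k _ => sub_le_self 1 (hb0 k))

end Chain

theorem exists_pos_le_hocSurvival {b : ℕ → ℝ} (hb0 : ∀ k, 0 ≤ b k) (hb1 : ∀ k, b k < 1)
    (hb : Summable b) : ∃ P > 0, ∀ n, P ≤ hocSurvival b n := by
  have hlog : Summable fun k => Real.log (1 - b k) := by
    simpa [sub_eq_add_neg] using Real.summable_log_one_add_of_summable hb.neg
  refine ⟨Real.exp (∑' k, Real.log (1 - b k)), Real.exp_pos _, fun n => ?_⟩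
  have hsurv : hocSurvival b n = Real.exp (∑ k ∈ range n, Real.log (1 - b k)) := by
    rw [Real.exp_sum]
    exact prod_congr rfl fun k _ => (Real.exp_log (sub_pos.mpr (hb1 k))).symm
  have hle : ∑' k, Real.log (1 - b k) ≤ ∑ k ∈ range n, Real.log (1 - b k) := by
    have := hlog.neg.sum_le_tsum (range n) fun k _ =>
      neg_nonneg.mpr (Real.log_nonpos (sub_nonneg.mpr (hb1 k).le) (sub_le_self 1 (hb0 k)))
    simpa [tsum_neg, sum_neg_distrib] using this
  rw [hsurv]
  exact Real.exp_le_exp.mpr hle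

theorem le_pow_of_renewal {u f : ℕ → ℝ} {r : ℝ} (hr : 0 < r) (hf : ∀ i, 0 ≤ f i)
    (hu0 : u 0 ≤ 1) (hu : ∀ n, u (n + 1) = ∑ i ∈ range (n + 1), u (n - i) * f i)
    (hfr : ∀ n, ∑ i ∈ range n, f i / r ^ (i + 1) ≤ 1) (n : ℕ) : u n ≤ r ^ n := by
  induction n using Nat.strong_induction_on with
  | _ n ih =>
    cases n with
    | zero => simpa using hu0
    | succ n =>
      calc u (n + 1) = ∑ i ∈ range (n + 1), u (n - i) * f i := hu n
        _ ≤ ∑ i ∈ range (n + 1), r ^ (n - i) * f i :=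
          sum_le_sum fun i _ => mul_le_mul_of_nonneg_right (ih _ (by omega)) (hf i)
        _ = (∑ i ∈ range (n + 1), f i / r ^ (i + 1)) * r ^ (n + 1) := by
          rw [sum_mul]
          refine sum_congr rfl fun i hi => ?_
          rw [show n + 1 = (n - i) + (i + 1) by have := mem_range.mp hi; omega, pow_add]
          field_simp
          ring
        _ ≤ r ^ (n + 1) := mul_le_of_le_one_left (by positivity) (hfr _)

section GeneratingFunction

variable {f : ℕ → ℝ} {C ρ ρ₁ : ℝ} (hf : ∀ i, 0 ≤ f i) (hfC : ∀ i, f i ≤ C * ρ ^ i)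
  (hρ₁ : 0 < ρ₁)
include hf hfC hρ₁

theorem div_pow_succ_le_of_le {t : ℝ} (ht : ρ₁ ≤ t) (i : ℕ) :
    f i / t ^ (i + 1) ≤ C / ρ₁ * (ρ / ρ₁) ^ i :=
  calc f i / t ^ (i + 1) ≤ C * ρ ^ i / ρ₁ ^ (i + 1) :=
        div_le_div₀ ((hf i).trans (hfC i)) (hfC i) (by positivity) (pow_le_pow_left₀ hρ₁.le ht _)
    _ = C / ρ₁ * (ρ / ρ₁) ^ i := by rw [div_pow, pow_succ]; field_simp

variable (hρ0 : 0 ≤ ρ) (hρρ₁ : ρ < ρ₁)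
include hρ0 hρρ₁

theorem summable_div_pow_succ {t : ℝ} (ht : ρ₁ ≤ t) : Summable fun i => f i / t ^ (i + 1) :=
  ((summable_geometric_of_lt_one (by positivity) ((div_lt_one hρ₁).mpr hρρ₁)).mul_left (C / ρ₁))
    |>.of_nonneg_of_le (fun i => div_nonneg (hf i) (pow_pos (hρ₁.trans_le ht) _).le)
      (div_pow_succ_le_of_le hf hfC hρ₁ ht)

theorem continuousOn_tsum_div_pow_succ :
    ContinuousOn (fun t => ∑' i, f i / t ^ (i + 1)) (Set.Ici ρ₁) := by
  refine continuousOn_tsum (fun i => ?_)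
    ((summable_geometric_of_lt_one (by positivity) ((div_lt_one hρ₁).mpr hρρ₁)).mul_left (C / ρ₁))
    fun i t ht => ?_
  · exact continuousOn_const.div (continuousOn_pow _) fun t ht =>
      (pow_pos (hρ₁.trans_le ht) _).ne'
  · rw [Real.norm_of_nonneg (div_nonneg (hf i) (pow_pos (hρ₁.trans_le ht) _).le)]
    exact div_pow_succ_le_of_le hf hfC hρ₁ ht i

end GeneratingFunction

theorem exists_sum_div_pow_le_one {f : ℕ → ℝ} {C ρ : ℝ} (hf : ∀ i, 0 ≤ f i)
    (hfC : ∀ i, f i ≤ C * ρ ^ i) (hρ0 : 0 ≤ ρ) (hρ1 : ρ < 1) (hf1 : ∑' i, f i < 1) :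
    ∃ r ∈ Set.Ioo 0 1, ∀ n, ∑ i ∈ range n, f i / r ^ (i + 1) ≤ 1 := by
  obtain ⟨ρ₁, hρρ₁, hρ₁1⟩ := exists_between hρ1
  have hρ₁ : 0 < ρ₁ := hρ0.trans_lt hρρ₁
  have hG := continuousOn_tsum_div_pow_succ hf hfC hρ₁ hρ0 hρρ₁
  have hG1 : ∑' i, f i / (1 : ℝ) ^ (i + 1) < 1 := by simpa using hf1
  have hnear : ∀ᶠ t in 𝓝[Set.Ioo ρ₁ 1] 1,
      ∑' i, f i / t ^ (i + 1) < 1 ∧ t ∈ Set.Ioo ρ₁ 1 :=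
    (((hG.continuousWithinAt hρ₁1.le).mono
      (Set.Ioo_subset_Ioi_self.trans Set.Ioi_subset_Ici_self)).eventually
        (gt_mem_nhds hG1)).and self_mem_nhdsWithin
  rw [nhdsWithin_Ioo_eq_nhdsLT hρ₁1] at hnear
  obtain ⟨r, hGr, hr⟩ := hnear.exists
  refine ⟨r, ⟨hρ₁.trans hr.1, hr.2⟩, fun n => ?_⟩
  refine ((summable_div_pow_succ hf hfC hρ₁ hρ0 hρρ₁ hr.1.le).sum_le_tsum (range n)
    fun i _ => ?_).trans hGr.le
  exact div_nonneg (hf i) (pow_pos (hρ₁.trans hr.1) _).le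

theorem stmt7_general (b : ℕ → ℝ) (hb0 : ∀ m, 0 ≤ b m) (hb1 : ∀ m, b m < 1)
    (ρ : ℝ) (hρ : ρ ∈ Set.Ioo (0 : ℝ) 1) (C : ℝ)
    (hC : ∀ m, b m ≤ C * ρ ^ m) :
    ∃ ρ' ∈ Set.Ioo (0 : ℝ) 1, ∃ C' : ℝ, ∀ m, hoc b m 0 ≤ C' * ρ' ^ m := by
  have hb1' : ∀ k, b k ≤ 1 := fun k => (hb1 k).le
  have hf0 := hocFirstReturn_nonneg hb0 hb1'
  have hb : Summable b :=
    ((summable_geometric_of_lt_one hρ.1.le hρ.2).mul_left C).of_nonneg_of_le hb0 hC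
  obtain ⟨P, hP, hPsurv⟩ := exists_pos_le_hocSurvival hb0 hb1 hb
  have hf1 : ∑' i, hocFirstReturn b i < 1 := by
    refine (Real.tsum_le_of_sum_range_le hf0 fun n => ?_).trans_lt (sub_lt_self 1 hP)
    rw [sum_range_hocFirstReturn]
    linarith [hPsurv n]
  obtain ⟨r, hr, hfr⟩ := exists_sum_div_pow_le_one hf0
    (fun i => (hocFirstReturn_le hb0 hb1' i).trans (hC i)) hρ.1.le hρ.2 hf1
  refine ⟨r, hr, 1, fun m => ?_⟩
  rw [one_mul]
  exact le_pow_of_renewal (u := fun n => hoc b n 0) hr.1 hf0 (hoc_zero_zero b).le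
    (hoc_succ_zero_eq_sum b) hfr m

/-- Geometric decay: if `b m = O(ρ^m)` for some `ρ ∈ (0,1)`, then `b*_m = O(ρ̄^m)`
for some `ρ̄ ∈ (0,1)`, where `b*_m = P(S_m = 0)` for the house-of-cards chain. -/
theorem stmt7 (b : ℕ → ℝ) (hb0 : ∀ m, 0 ≤ b m) (hb1 : ∀ m, b m < 1) (hb01 : b 0 < 1)
    (hmono : Antitone b) (ρ : ℝ) (hρ : ρ ∈ Set.Ioo (0 : ℝ) 1) (C : ℝ)
    (hC : ∀ m, b m ≤ C * ρ ^ m) :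
    ∃ ρ' ∈ Set.Ioo (0 : ℝ) 1, ∃ C' : ℝ, ∀ m, hoc b m 0 ≤ C' * ρ' ^ m :=
  stmt7_general b hb0 hb1 ρ hρ C hC
end

section
/- Under the same hypotheses on (G_{y,x}), for any x (with summable weighted norm) and any two sequences y, y' ∈ E^ℤ agreeing at coordinates −m+1, …, 0 (i.e. y_i = y'_i for −m+1 ≤ i ≤ 0), the limits satisfy |λ₀^{(y,x)} − λ₀^{(y',x)}| ≤ L^r κ^{m/r − 1} · L̃/(1−κ), where L̃ = Σ_{i=1}^r L^i. In particular the dependence of λ₀ on remote past values of y decays geometrically in m, uniformly in x. -/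
/-!
Unrolling `m - 1` steps of the recursion, along which `y` and `y'` agree, writes both `λ₀`'s
as the same composition applied to two different states. That composition is an `r`-block
contraction, so it shrinks their distance by `L ^ ((m - 1) % r) * κ ^ ((m - 1) / r)`. The two
states themselves are at most `L̃ / (1 - κ)` apart: over one block of `r` steps the change of `y`
moves the state by at most `L̃`, and the contraction sums these errors to a geometric series.
-/

open Classical

/-- Backward iterates of the observation-driven recursion:
`backIter G y x t n z = G (y (t-1)) (x t) (G (y (t-2)) (x (t-1)) (… (G (y (t-n)) (x (t-n+1)) z)))`,
the composition of the `n` maps `G_{y_{t-1},x_t} ∘ ⋯ ∘ G_{y_{t-n},x_{t-n+1}}` applied to `z`. -/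
def backIter {E V W : Type*} (G : E → V → W → W) (y : ℤ → E) (x : ℤ → V) :
    ℤ → ℕ → W → W
  | _, 0, z => z
  | t, n + 1, z => G (y (t - 1)) (x t) (backIter G y x (t - 1) n z)

section Composition

variable {E V W : Type*} (G : E → V → W → W)

theorem backIter_add (y : ℤ → E) (x : ℤ → V) (a b : ℕ) (t : ℤ) (z : W) :
    backIter G y x t (a + b) z = backIter G y x t a (backIter G y x (t - a) b z) := by
  induction a generalizing t with
  | zero => simp [backIter]
  | succ a ih =>
    rw [Nat.add_right_comm]
    simp only [backIter, ih]
    congr 3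
    push_cast
    ring

theorem backIter_congr {y y' : ℤ → E} (x : ℤ → V) {t : ℤ} {n : ℕ}
    (h : ∀ i, t - n ≤ i → i ≤ t - 1 → y i = y' i) :
    backIter G y x t n = backIter G y' x t n := by
  induction n generalizing t with
  | zero => rfl
  | succ n ih =>
    funext z
    simp only [backIter]
    rw [h (t - 1) (by push_cast; omega) le_rfl,
      ih fun i h₁ h₂ => h i (by push_cast at h₁ ⊢; omega) (by omega)]

end Composition

section Lipschitz

variable {E V W : Type*} [SeminormedAddCommGroup W] (G : E → V → W → W) {L κ : ℝ} {r : ℕ}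

theorem norm_backIter_sub_le_pow (hL : 0 ≤ L)
    (hGz : ∀ a b (z z' : W), ‖G a b z - G a b z'‖ ≤ L * ‖z - z'‖)
    (y : ℤ → E) (x : ℤ → V) (n : ℕ) (t : ℤ) (z z' : W) :
    ‖backIter G y x t n z - backIter G y x t n z'‖ ≤ L ^ n * ‖z - z'‖ := by
  induction n generalizing t with
  | zero => simp [backIter]
  | succ n ih =>
    calc ‖backIter G y x t (n + 1) z - backIter G y x t (n + 1) z'‖
        ≤ L * ‖backIter G y x (t - 1) n z - backIter G y x (t - 1) n z'‖ := hGz _ _ _ _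
      _ ≤ L * (L ^ n * ‖z - z'‖) := by gcongr; exact ih _
      _ = L ^ (n + 1) * ‖z - z'‖ := by ring

theorem norm_backIter_mul_sub_le (hκ : 0 ≤ κ) {y : ℤ → E} {x : ℤ → V}
    (hcontract : ∀ t (z z' : W),
      ‖backIter G y x t r z - backIter G y x t r z'‖ ≤ κ * ‖z - z'‖)
    (q : ℕ) (t : ℤ) (z z' : W) :
    ‖backIter G y x t (r * q) z - backIter G y x t (r * q) z'‖ ≤ κ ^ q * ‖z - z'‖ := by
  induction q generalizing z z' with
  | zero => simp [backIter]
  | succ q ih =>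
    rw [Nat.mul_succ, backIter_add, backIter_add]
    calc _ ≤ κ ^ q * ‖backIter G y x (t - ↑(r * q)) r z -
          backIter G y x (t - ↑(r * q)) r z'‖ := ih _ _
      _ ≤ κ ^ q * (κ * ‖z - z'‖) := by gcongr; exact hcontract _ _ _
      _ = κ ^ (q + 1) * ‖z - z'‖ := by ring

theorem norm_backIter_sub_le_pow_mod_mul_pow_div (hL : 0 ≤ L) (hκ : 0 ≤ κ)
    (hGz : ∀ a b (z z' : W), ‖G a b z - G a b z'‖ ≤ L * ‖z - z'‖)
    {y : ℤ → E} {x : ℤ → V}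
    (hcontract : ∀ t (z z' : W),
      ‖backIter G y x t r z - backIter G y x t r z'‖ ≤ κ * ‖z - z'‖)
    (n : ℕ) (t : ℤ) (z z' : W) :
    ‖backIter G y x t n z - backIter G y x t n z'‖ ≤
      L ^ (n % r) * κ ^ (n / r) * ‖z - z'‖ := by
  conv_lhs => rw [← Nat.mod_add_div n r, backIter_add, backIter_add]
  calc _ ≤ L ^ (n % r) * ‖backIter G y x (t - ↑(n % r)) (r * (n / r)) z -
          backIter G y x (t - ↑(n % r)) (r * (n / r)) z'‖ :=
        norm_backIter_sub_le_pow G hL hGz y x _ _ _ _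
    _ ≤ L ^ (n % r) * (κ ^ (n / r) * ‖z - z'‖) := by
        gcongr; exact norm_backIter_mul_sub_le G hκ hcontract _ _ _ _
    _ = L ^ (n % r) * κ ^ (n / r) * ‖z - z'‖ := by ring

theorem norm_backIter_sub_backIter_le_sum (hL : 0 ≤ L)
    (hGy : ∀ a a' b (z z' : W), ‖G a b z - G a' b z'‖ ≤ L * (1 + ‖z - z'‖))
    (y y' : ℤ → E) (x : ℤ → V) (n : ℕ) (t : ℤ) (z : W) :
    ‖backIter G y x t n z - backIter G y' x t n z‖ ≤
      ∑ i ∈ Finset.range n, L ^ (i + 1) := by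
  induction n generalizing t with
  | zero => simp [backIter]
  | succ n ih =>
    calc ‖backIter G y x t (n + 1) z - backIter G y' x t (n + 1) z‖
        ≤ L * (1 + ‖backIter G y x (t - 1) n z - backIter G y' x (t - 1) n z‖) :=
          hGy _ _ _ _ _
      _ ≤ L * (1 + ∑ i ∈ Finset.range n, L ^ (i + 1)) := by gcongr; exact ih _
      _ = ∑ i ∈ Finset.range (n + 1), L ^ (i + 1) := by
        rw [Finset.sum_range_succ', mul_add, Finset.mul_sum]
        simp only [← pow_succ']
        ring

theorem norm_backIter_sub_backIter_le_div (hr : 0 < r) (hL : 0 ≤ L) (hκ0 : 0 ≤ κ)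
    (hκ1 : κ < 1)
    (hGy : ∀ a a' b (z z' : W), ‖G a b z - G a' b z'‖ ≤ L * (1 + ‖z - z'‖))
    {y : ℤ → E} (y' : ℤ → E) {x : ℤ → V}
    (hcontract : ∀ t (z z' : W),
      ‖backIter G y x t r z - backIter G y x t r z'‖ ≤ κ * ‖z - z'‖)
    (n : ℕ) (t : ℤ) (z : W) :
    ‖backIter G y x t n z - backIter G y' x t n z‖ ≤
      (∑ i ∈ Finset.range r, L ^ (i + 1)) / (1 - κ) := by
  set Ltil := ∑ i ∈ Finset.range r, L ^ (i + 1)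
  have hshort :
      ∀ k ≤ r, ∀ t (z : W), ‖backIter G y x t k z - backIter G y' x t k z‖ ≤ Ltil :=
    fun k hk t z => (norm_backIter_sub_backIter_le_sum G hL hGy y y' x k t z).trans <|
      Finset.sum_le_sum_of_subset_of_nonneg (Finset.range_subset_range.2 hk)
        fun i _ _ => pow_nonneg hL _
  have hκ : 0 < 1 - κ := sub_pos.2 hκ1
  induction n using Nat.strong_induction_on generalizing t z with
  | _ n ih =>
    rcases lt_or_ge n r with hn | hn
    · exact (hshort n hn.le t z).trans <| le_div_self
        (Finset.sum_nonneg fun i _ => pow_nonneg hL _) hκ (by linarith)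
    · obtain ⟨k, rfl⟩ := Nat.exists_eq_add_of_le hn
      rw [backIter_add, backIter_add]
      set u := backIter G y x (t - r) k z
      set u' := backIter G y' x (t - r) k z
      calc ‖backIter G y x t r u - backIter G y' x t r u'‖
          ≤ ‖backIter G y x t r u - backIter G y x t r u'‖ +
            ‖backIter G y x t r u' - backIter G y' x t r u'‖ :=
            norm_sub_le_norm_sub_add_norm_sub _ _ _
        _ ≤ κ * (Ltil / (1 - κ)) + Ltil := by
          gcongr
          · exact (hcontract t u u').trans (by gcongr; exact ih k (by omega) _ _)
          · exact hshort r le_rfl t u'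
        _ = Ltil / (1 - κ) := by field_simp; ring

theorem norm_backIter_sub_backIter_le_of_eqOn (hr : 0 < r) (hL : 0 ≤ L) (hκ0 : 0 ≤ κ)
    (hκ1 : κ < 1) (hGz : ∀ a b (z z' : W), ‖G a b z - G a b z'‖ ≤ L * ‖z - z'‖)
    (hGy : ∀ a a' b (z z' : W), ‖G a b z - G a' b z'‖ ≤ L * (1 + ‖z - z'‖))
    {y y' : ℤ → E} {x : ℤ → V}
    (hcontract : ∀ t (z z' : W),
      ‖backIter G y x t r z - backIter G y x t r z'‖ ≤ κ * ‖z - z'‖)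
    {t : ℤ} {k n : ℕ} (hagree : ∀ i, t - k ≤ i → i ≤ t - 1 → y i = y' i)
    (hkn : k ≤ n) (z : W) :
    ‖backIter G y x t n z - backIter G y' x t n z‖ ≤
      L ^ (k % r) * κ ^ (k / r) * ((∑ i ∈ Finset.range r, L ^ (i + 1)) / (1 - κ)) := by
  obtain ⟨j, rfl⟩ := Nat.exists_eq_add_of_le hkn
  rw [backIter_add, backIter_add, ← backIter_congr G x hagree]
  calc _ ≤ L ^ (k % r) * κ ^ (k / r) *
        ‖backIter G y x (t - k) j z - backIter G y' x (t - k) j z‖ :=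
      norm_backIter_sub_le_pow_mod_mul_pow_div G hL hκ0 hGz hcontract _ _ _ _
    _ ≤ _ := by
      gcongr
      exact norm_backIter_sub_backIter_le_div G hr hL hκ0 hκ1 hGy y' hcontract _ _ _

end Lipschitz

theorem pow_mod_mul_pow_div_le {L κ : ℝ} (hL : 1 ≤ L) (hκ0 : 0 < κ) (hκ1 : κ ≤ 1)
    {r : ℕ} (hr : 0 < r) (m : ℕ) :
    L ^ ((m - 1) % r) * κ ^ ((m - 1) / r) ≤ L ^ r * κ ^ ((m : ℝ) / r - 1) := by
  have hm : m ≤ r * ((m - 1) / r + 1) := by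
    have := Nat.lt_mul_div_succ (m - 1) hr
    omega
  have hexp : (m : ℝ) / r - 1 ≤ ((m - 1) / r : ℕ) := by
    rw [sub_le_iff_le_add, div_le_iff₀ (by exact_mod_cast hr)]
    exact_mod_cast hm.trans_eq (mul_comm _ _)
  gcongr
  · exact (Nat.mod_lt _ hr).le
  · rw [← Real.rpow_natCast]
    exact Real.rpow_le_rpow_of_exponent_ge hκ0 hκ1 hexp

theorem stmt13_general {E V W : Type*} [NormedAddCommGroup V] [NormedAddCommGroup W]
    (G : E → V → W → W) (L : ℝ) (hL : 1 ≤ L)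
    (hLip : ∀ (y y' : E) (x x' : V) (z z' : W),
      ‖G y x z - G y' x' z'‖ ≤
        L * ((if y = y' then (0 : ℝ) else 1) + ‖x - x'‖ + ‖z - z'‖))
    (r : ℕ) (hr : 0 < r) (κ : ℝ) (hκ : κ ∈ Set.Ioo (0 : ℝ) 1)
    (hcontract : ∀ (y : ℤ → E) (x : ℤ → V) (t : ℤ) (z z' : W),
      ‖backIter G y x t r z - backIter G y x t r z'‖ ≤ κ * ‖z - z'‖)
    (y y' : ℤ → E) (x : ℤ → V)
    (m : ℕ)
    (hagree : ∀ i : ℤ, -(m : ℤ) + 1 ≤ i → i ≤ 0 → y i = y' i)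
    (lam0 lam0' : W)
    (hlam0 : Filter.Tendsto (fun n : ℕ => backIter G y x 0 (n + 1) 0)
      Filter.atTop (nhds lam0))
    (hlam0' : Filter.Tendsto (fun n : ℕ => backIter G y' x 0 (n + 1) 0)
      Filter.atTop (nhds lam0')) :
    ‖lam0 - lam0'‖ ≤
      L ^ r * κ ^ ((m : ℝ) / (r : ℝ) - 1) *
        ((∑ i ∈ Finset.range r, L ^ (i + 1)) / (1 - κ)) := by
  obtain ⟨hκ0, hκ1⟩ := hκ
  have hL0 : 0 ≤ L := zero_le_one.trans hL
  have hGz : ∀ a b (z z' : W), ‖G a b z - G a b z'‖ ≤ L * ‖z - z'‖ := fun a b z z' => by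
    simpa using hLip a a b b z z'
  have hGy : ∀ a a' b (z z' : W), ‖G a b z - G a' b z'‖ ≤ L * (1 + ‖z - z'‖) :=
    fun a a' b z z' => (hLip a a' b b z z').trans <| by gcongr; split_ifs <;> simp
  have hfinite : ∀ n, m - 1 ≤ n → ‖backIter G y x 0 n 0 - backIter G y' x 0 n 0‖ ≤
      L ^ ((m - 1) % r) * κ ^ ((m - 1) / r) *
        ((∑ i ∈ Finset.range r, L ^ (i + 1)) / (1 - κ)) :=
    fun n hn => norm_backIter_sub_backIter_le_of_eqOn G hr hL0 hκ0.le hκ1 hGz hGy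
      (hcontract y x) (fun i h₁ h₂ => hagree i (by omega) (by omega)) hn 0
  have hlim := le_of_tendsto (hlam0.sub hlam0').norm <|
    Filter.eventually_atTop.2 ⟨m, fun n hn => hfinite (n + 1) (by omega)⟩
  refine hlim.trans (mul_le_mul_of_nonneg_right (pow_mod_mul_pow_div_le hL hκ0 hκ1.le hr m) ?_)
  exact div_nonneg (Finset.sum_nonneg fun i _ => pow_nonneg hL0 _) (sub_nonneg.2 hκ1.le)

/-- Geometric decay of the dependence of `λ₀` on remote past values of `y`:
if `y` and `y'` agree at coordinates `-m+1, …, 0` then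
`‖λ₀^{(y,x)} - λ₀^{(y',x)}‖ ≤ L^r κ^{m/r - 1} · L̃ / (1 - κ)` with `L̃ = Σ_{i=1}^r L^i`,
uniformly in `x`. -/
theorem stmt13 {E V W : Type*} [NormedAddCommGroup V] [NormedAddCommGroup W]
    [CompleteSpace W]
    (G : E → V → W → W) (L : ℝ) (hL : 1 ≤ L)
    (hLip : ∀ (y y' : E) (x x' : V) (z z' : W),
      ‖G y x z - G y' x' z'‖ ≤
        L * ((if y = y' then (0 : ℝ) else 1) + ‖x - x'‖ + ‖z - z'‖))
    (r : ℕ) (hr : 0 < r) (κ : ℝ) (hκ : κ ∈ Set.Ioo (0 : ℝ) 1)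
    (hcontract : ∀ (y : ℤ → E) (x : ℤ → V) (t : ℤ) (z z' : W),
      ‖backIter G y x t r z - backIter G y x t r z'‖ ≤ κ * ‖z - z'‖)
    (y y' : ℤ → E) (x : ℤ → V)
    (hx : ∀ t : ℤ, Summable fun i : ℕ => κ ^ ((i : ℝ) / (r : ℝ)) * ‖x (t - i)‖)
    (m : ℕ) (hm : 1 ≤ m)
    (hagree : ∀ i : ℤ, -(m : ℤ) + 1 ≤ i → i ≤ 0 → y i = y' i)
    (lam0 lam0' : W)
    (hlam0 : Filter.Tendsto (fun n : ℕ => backIter G y x 0 (n + 1) 0)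
      Filter.atTop (nhds lam0))
    (hlam0' : Filter.Tendsto (fun n : ℕ => backIter G y' x 0 (n + 1) 0)
      Filter.atTop (nhds lam0')) :
    ‖lam0 - lam0'‖ ≤
      L ^ r * κ ^ ((m : ℝ) / (r : ℝ) - 1) *
        ((∑ i ∈ Finset.range r, L ^ (i + 1)) / (1 - κ)) :=
  stmt13_general G L hL hLip r hr κ hκ hcontract y y' x m hagree lam0 lam0' hlam0 hlam0'
end
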